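/- Let T > 0, a be a real number with |a| <= T, and for bounded measurable controls u : [0,T] -> [-1,1] and v : [0,T] -> [-2,2] define J(u,v) := |a + \int_0^T u(t) dt - \int_0^T v(t) dt|. Then sup_u inf_v J(u,v) = 0 while inf_v sup_u J(u,v) >= T. In particular, the deterministic game has no value: sup_u inf_v J(u,v) < inf_v sup_u J(u,v). -/
import Mathlib

open MeasureTheory

private lemma int_bound (T C : ℝ) (hT : 0 ≤ T) (u : ℝ → ℝ)
    (h : ∀ t, |u t| ≤ C) : |∫ t in (0:ℝ)..T, u t| ≤ C * T := by
  have := intervalIntegral.norm_integral_le_of_norm_le_const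
    (a := (0:ℝ)) (b := T) (C := C) (f := u) (fun x _ => h x)
  simpa [abs_of_nonneg hT] using this

private lemma const_int (T c : ℝ) : (∫ _t in (0:ℝ)..T, c) = c * T := by
  simp [mul_comm]

-- inner infimum is 0 for every admissible u
private lemma inner_inf (T a : ℝ) (hT : 0 < T) (ha : |a| ≤ T) (u : ℝ → ℝ)
    (hu : Measurable u ∧ ∀ t, u t ∈ Set.Icc (-1 : ℝ) 1) :
    sInf ((fun v : ℝ → ℝ => |a + (∫ t in (0:ℝ)..T, u t) - ∫ t in (0:ℝ)..T, v t|) ''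
      {v | Measurable v ∧ ∀ t, v t ∈ Set.Icc (-2 : ℝ) 2}) = 0 := by
  set I := ∫ t in (0:ℝ)..T, u t with hI
  have hIb : |I| ≤ 1 * T := int_bound T 1 hT.le u (fun t => abs_le.2 ⟨(hu.2 t).1, (hu.2 t).2⟩)
  set c : ℝ := (a + I) / T with hc
  have hcT : c * T = a + I := div_mul_cancel₀ _ (ne_of_gt hT)
  have hcbound : |c| ≤ 2 := by
    rw [hc, abs_div, abs_of_pos hT, div_le_iff₀ hT]
    calc |a + I| ≤ |a| + |I| := abs_add_le _ _
      _ ≤ T + 1 * T := add_le_add ha hIb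
      _ = 2 * T := by ring
  have hmem : (0:ℝ) ∈ (fun v : ℝ → ℝ => |a + I - ∫ t in (0:ℝ)..T, v t|) ''
      {v | Measurable v ∧ ∀ t, v t ∈ Set.Icc (-2 : ℝ) 2} := by
    refine ⟨fun _ => c, ⟨measurable_const, fun t => ?_⟩, ?_⟩
    · exact abs_le.1 hcbound
    · simp only [const_int]
      rw [hcT]; simp
  apply le_antisymm
  · exact csInf_le ⟨0, fun x ⟨v, _, hv⟩ => hv ▸ abs_nonneg _⟩ hmem
  · exact le_csInf ⟨0, hmem⟩ (fun x ⟨v, _, hv⟩ => hv ▸ abs_nonneg _)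

private lemma inner_sup (T a : ℝ) (hT : 0 < T) (v : ℝ → ℝ)
    (hv : Measurable v ∧ ∀ t, v t ∈ Set.Icc (-2 : ℝ) 2) :
    T ≤ sSup ((fun u : ℝ → ℝ => |a + (∫ t in (0:ℝ)..T, u t) - ∫ t in (0:ℝ)..T, v t|) ''
      {u | Measurable u ∧ ∀ t, u t ∈ Set.Icc (-1 : ℝ) 1}) := by
  set J := ∫ t in (0:ℝ)..T, v t with hJ
  have hbdd : BddAbove ((fun u : ℝ → ℝ => |a + (∫ t in (0:ℝ)..T, u t) - J|) ''
      {u | Measurable u ∧ ∀ t, u t ∈ Set.Icc (-1 : ℝ) 1}) := by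
    refine ⟨|a| + 1 * T + |J|, ?_⟩
    rintro x ⟨u, hu, rfl⟩
    have hIb := int_bound T 1 hT.le u (fun t => abs_le.2 ⟨(hu.2 t).1, (hu.2 t).2⟩)
    calc |a + (∫ t in (0:ℝ)..T, u t) - J|
        ≤ |a| + |∫ t in (0:ℝ)..T, u t| + |J| := by
          have := abs_add_le (a + ∫ t in (0:ℝ)..T, u t) (-J)
          have h2 := abs_add_le a (∫ t in (0:ℝ)..T, u t)
          simp only [abs_neg] at this
          calc |a + (∫ t in (0:ℝ)..T, u t) - J| = |(a + ∫ t in (0:ℝ)..T, u t) + -J| := by ring_nf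
            _ ≤ |a + ∫ t in (0:ℝ)..T, u t| + |J| := this
            _ ≤ |a| + |∫ t in (0:ℝ)..T, u t| + |J| := by linarith
      _ ≤ |a| + 1 * T + |J| := by linarith
  have h1 : |a + T - J| ∈ (fun u : ℝ → ℝ => |a + (∫ t in (0:ℝ)..T, u t) - J|) ''
      {u | Measurable u ∧ ∀ t, u t ∈ Set.Icc (-1 : ℝ) 1} :=
    ⟨fun _ => 1, ⟨measurable_const, fun t => ⟨by norm_num, le_refl 1⟩⟩, by simp [const_int]⟩
  have h2 : |a + -T - J| ∈ (fun u : ℝ → ℝ => |a + (∫ t in (0:ℝ)..T, u t) - J|) ''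
      {u | Measurable u ∧ ∀ t, u t ∈ Set.Icc (-1 : ℝ) 1} :=
    ⟨fun _ => -1, ⟨measurable_const, fun t => ⟨le_refl _, by norm_num⟩⟩, by simp [const_int]⟩
  have le1 := le_csSup hbdd h1
  have le2 := le_csSup hbdd h2
  have key : T ≤ max |a + T - J| |a + -T - J| := by
    rcases le_or_gt (a - J) 0 with h | h
    · refine le_trans ?_ (le_max_right _ _)
      have hle : a + -T - J ≤ 0 := by linarith
      rw [abs_of_nonpos hle]; linarith
    · refine le_trans ?_ (le_max_left _ _)
      have hge : 0 ≤ a + T - J := by linarith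
      rw [abs_of_nonneg hge]; linarith
  rcases max_cases |a + T - J| |a + -T - J| with ⟨he, _⟩ | ⟨he, _⟩
  · rw [he] at key; linarith
  · rw [he] at key; linarith

/-- Buckdahn's deterministic counterexample: the open-loop game with
J(u,v) = |a + ∫₀ᵀ u - ∫₀ᵀ v| has lower value 0 and upper value ≥ T, so no value. -/
theorem buckdahn_no_value (T a : ℝ) (hT : 0 < T) (ha : |a| ≤ T) :
    sSup ((fun u : ℝ → ℝ =>
        sInf ((fun v : ℝ → ℝ => |a + (∫ t in (0:ℝ)..T, u t) - ∫ t in (0:ℝ)..T, v t|) ''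
          {v | Measurable v ∧ ∀ t, v t ∈ Set.Icc (-2 : ℝ) 2})) ''
        {u | Measurable u ∧ ∀ t, u t ∈ Set.Icc (-1 : ℝ) 1}) = 0 ∧
    T ≤ sInf ((fun v : ℝ → ℝ =>
        sSup ((fun u : ℝ → ℝ => |a + (∫ t in (0:ℝ)..T, u t) - ∫ t in (0:ℝ)..T, v t|) ''
          {u | Measurable u ∧ ∀ t, u t ∈ Set.Icc (-1 : ℝ) 1})) ''
        {v | Measurable v ∧ ∀ t, v t ∈ Set.Icc (-2 : ℝ) 2}) ∧
    sSup ((fun u : ℝ → ℝ =>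
        sInf ((fun v : ℝ → ℝ => |a + (∫ t in (0:ℝ)..T, u t) - ∫ t in (0:ℝ)..T, v t|) ''
          {v | Measurable v ∧ ∀ t, v t ∈ Set.Icc (-2 : ℝ) 2})) ''
        {u | Measurable u ∧ ∀ t, u t ∈ Set.Icc (-1 : ℝ) 1}) <
    sInf ((fun v : ℝ → ℝ =>
        sSup ((fun u : ℝ → ℝ => |a + (∫ t in (0:ℝ)..T, u t) - ∫ t in (0:ℝ)..T, v t|) ''
          {u | Measurable u ∧ ∀ t, u t ∈ Set.Icc (-1 : ℝ) 1})) ''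
        {v | Measurable v ∧ ∀ t, v t ∈ Set.Icc (-2 : ℝ) 2}) := by
  have hsup : sSup ((fun u : ℝ → ℝ =>
      sInf ((fun v : ℝ → ℝ => |a + (∫ t in (0:ℝ)..T, u t) - ∫ t in (0:ℝ)..T, v t|) ''
        {v | Measurable v ∧ ∀ t, v t ∈ Set.Icc (-2 : ℝ) 2})) ''
      {u | Measurable u ∧ ∀ t, u t ∈ Set.Icc (-1 : ℝ) 1}) = 0 := by
    have himg : ((fun u : ℝ → ℝ =>
        sInf ((fun v : ℝ → ℝ => |a + (∫ t in (0:ℝ)..T, u t) - ∫ t in (0:ℝ)..T, v t|) ''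
          {v | Measurable v ∧ ∀ t, v t ∈ Set.Icc (-2 : ℝ) 2})) ''
        {u | Measurable u ∧ ∀ t, u t ∈ Set.Icc (-1 : ℝ) 1}) = {0} := by
      apply Set.eq_singleton_iff_nonempty_unique_mem.2
      constructor
      · exact ⟨_, Set.mem_image_of_mem _
          (show (fun _ : ℝ => (0:ℝ)) ∈ _ from ⟨measurable_const, fun t => ⟨by norm_num, by norm_num⟩⟩)⟩
      · rintro x ⟨u, hu, rfl⟩
        exact inner_inf T a hT ha u hu
    rw [himg]; exact csSup_singleton 0
  have hinf : T ≤ sInf ((fun v : ℝ → ℝ =>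
      sSup ((fun u : ℝ → ℝ => |a + (∫ t in (0:ℝ)..T, u t) - ∫ t in (0:ℝ)..T, v t|) ''
        {u | Measurable u ∧ ∀ t, u t ∈ Set.Icc (-1 : ℝ) 1})) ''
      {v | Measurable v ∧ ∀ t, v t ∈ Set.Icc (-2 : ℝ) 2}) := by
    apply le_csInf
    · exact ⟨_, Set.mem_image_of_mem _
        (show (fun _ : ℝ => (0:ℝ)) ∈ _ from ⟨measurable_const, fun t => ⟨by norm_num, by norm_num⟩⟩)⟩
    · rintro x ⟨v, hv, rfl⟩
      exact inner_sup T a hT v hv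
  exact ⟨hsup, hinf, by rw [hsup]; linarith⟩
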